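/- The partially annealed mean number of returns to the origin of the random walk in sparse random environment with drift f equals the grand canonical partition function of the pinning model: E_τ[E_{V}^{ω,τ}(card{n ≥ 0 : X_n = 0})] = Σ_{n ≥ 0} Z_{n,ω}^{β,h} e^{-fn}, where the potential is ΔV_i = (h + βω_i)1_{i ∈ τ} − f for i ≥ 1 and is extended symmetrically about −1/2. -/

import Mathlib

/-!
The expected number of visits to `0` is `∑ₙ P₀(Xₙ = 0)`, the total weight `G` of the paths from
`0` back to `0`. Cutting such a loop at its first return to `0` gives `G = 1 + r G`, where `r` is
the return probability, and `G` is the least solution, so `G = (1 - r)⁻¹`. Since `V` is symmetric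
about `-1/2`, the reflection `z ↦ -z` preserves the walk, so `r` is the probability of reaching
`0` from `1`. For the walk killed outside `(0, N)` this is `1 - W(1) / W(N)` with the scale
function `W`; letting `N → ∞` gives `r = 1 - 1 / ∑ₙ e^{Vₙ}`, hence `G = ∑ₙ e^{Vₙ}`. For the sparse
potential `e^{Vₙ}` is the pinning weight times `e^{-fn}`, and integrating over `τ` by monotone
convergence gives the partition function.
-/

open MeasureTheory
open scoped ENNReal NNReal

/-- Probability of a step from `i` to `j` for the random walk in potential `V`:
`p(i,i+1) = 1/(1+exp(V i - V (i-1)))`, `p(i,i-1) = 1 - p(i,i+1)`, `0` otherwise. -/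
noncomputable def stepProb (V : ℤ → ℝ) (i j : ℤ) : ℝ :=
  if j = i + 1 then 1 / (1 + Real.exp (V i - V (i - 1)))
  else if j = i - 1 then 1 - 1 / (1 + Real.exp (V i - V (i - 1)))
  else 0

/-- `P b` is the law of the nearest-neighbour Markov chain on `ℤ` started at `b`
with transition probabilities `stepProb V`, characterized through its
finite-dimensional distributions. -/
def IsRWInPotential (V : ℤ → ℝ) (P : ℤ → Measure (ℕ → ℤ)) : Prop :=
  (∀ b, IsProbabilityMeasure (P b)) ∧
  ∀ (b : ℤ) (n : ℕ) (x : ℕ → ℤ), x 0 = b →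
    (P b {w | ∀ k ≤ n, w k = x k}).toReal
      = ∏ k ∈ Finset.range n, stepProb V (x k) (x (k + 1))

/-- The scale function `W`: `W 0 = 0`, `W n = ∑_{0 ≤ k < n} e^{V k}` for `n ≥ 1`,
`W (-n) = -∑_{1 ≤ k ≤ n} e^{V (-k)}` for `n ≥ 1`. -/
noncomputable def Wfun (V : ℤ → ℝ) (z : ℤ) : ℝ :=
  if 0 ≤ z then ∑ k ∈ Finset.range z.toNat, Real.exp (V (k : ℤ))
  else -∑ k ∈ Finset.range (-z).toNat, Real.exp (V (-((k : ℤ) + 1)))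

/-- Entrance time `H_a = inf {n ≥ 1 : X_n = a}`, with value `⊤` if no such time exists. -/
noncomputable def entranceTime (a : ℤ) (w : ℕ → ℤ) : ℕ∞ :=
  sInf ((fun m : ℕ => (m : ℕ∞)) '' {m : ℕ | 1 ≤ m ∧ w m = a})

/-- Hitting time `H̃_a = inf {n ≥ 0 : X_n = a}`, with value `⊤` if no such time exists. -/
noncomputable def hittingTime (a : ℤ) (w : ℕ → ℤ) : ℕ∞ :=
  sInf ((fun m : ℕ => (m : ℕ∞)) '' {m : ℕ | w m = a})

/-- Number of visits of the path `w` to the site `a`, as an extended nonnegative real. -/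
noncomputable def numVisits (a : ℤ) (w : ℕ → ℤ) : ℝ≥0∞ :=
  ∑' n : ℕ, if w n = a then (1 : ℝ≥0∞) else 0

/-- Value of the sparse potential at a nonnegative site `n`:
`V_n = ∑_{i=1}^n ((h + β ω_i) 1_{i ∈ τ} - f)`. -/
noncomputable def sparsePotNat (β h f : ℝ) (ω : ℕ → ℝ) (t : ℕ → ℕ) (n : ℕ) : ℝ :=
  ∑ i ∈ Finset.Icc 1 n,
    ((h + β * ω i) * Set.indicator (Set.range t) (fun _ => (1 : ℝ)) i - f)

/-- The sparse potential on `ℤ`, extended symmetrically about `-1/2`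
(`V_{-i-1} = V_i`, i.e. the symmetric extension normalized by `V_{-1} = 0`). -/
noncomputable def sparsePot (β h f : ℝ) (ω : ℕ → ℝ) (t : ℕ → ℕ) (z : ℤ) : ℝ :=
  if 0 ≤ z then sparsePotNat β h f ω t z.toNat
  else sparsePotNat β h f ω t (-(z + 1)).toNat

lemma ENNReal.tsum_iSup_of_monotone {α : Type*} {f : α → ℕ → ℝ≥0∞}
    (hf : ∀ a, Monotone (f a)) : ∑' a, ⨆ n, f a n = ⨆ n, ∑' a, f a n := by
  simp_rw [ENNReal.tsum_eq_iSup_sum, ENNReal.finsetSum_iSup_of_monotone hf]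
  exact iSup_comm

lemma ENNReal.tsum_option {α : Type*} (f : Option α → ℝ≥0∞) :
    ∑' o, f o = f none + ∑' a, f (some a) := by
  rw [ENNReal.tsum_eq_add_tsum_ite none]
  congr 1
  rw [← (Option.some_injective α).tsum_eq fun o ho => ?_]
  · simp
  · cases o with
    | none => simp at ho
    | some a => exact ⟨a, rfl⟩

/-- `(1 - r)⁻¹ = ∑ rⁿ` is the least solution of `a = 1 + r * a`; the `b n` bound `a` by it. -/
lemma ENNReal.eq_inv_one_sub_of_eq_one_add_mul {a r : ℝ≥0∞} {b : ℕ → ℝ≥0∞}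
    (ha : a = 1 + r * a) (hab : a ≤ ⨆ n, b n) (hb₀ : b 0 ≤ 1)
    (hb : ∀ n, b (n + 1) ≤ 1 + r * b n) : a = (1 - r)⁻¹ := by
  rw [← ENNReal.tsum_geometric]
  refine le_antisymm (hab.trans (iSup_le fun n => ?_)) ?_
  · have hbn : b n ≤ ∑ k ∈ Finset.range (n + 1), r ^ k := by
      induction n with
      | zero => simpa using hb₀
      | succ n ih =>
        rw [geom_sum_succ, add_comm (r * _)]
        exact (hb n).trans (by gcongr)
    exact hbn.trans (ENNReal.sum_le_tsum _)
  · rw [ENNReal.tsum_eq_iSup_nat]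
    refine iSup_le fun n => ?_
    induction n with
    | zero => simp
    | succ n ih =>
      rw [geom_sum_succ, add_comm (r * _), ha]
      gcongr

section StepProb

variable (V : ℤ → ℝ)

lemma stepProb_succ (i : ℤ) : stepProb V i (i + 1) = 1 / (1 + Real.exp (V i - V (i - 1))) := by
  simp [stepProb]

lemma stepProb_pred (i : ℤ) : stepProb V i (i - 1) = 1 / (1 + Real.exp (V (i - 1) - V i)) := by
  rw [stepProb, if_neg (by omega), if_pos rfl, show V (i - 1) - V i = -(V i - V (i - 1)) by ring,
    Real.exp_neg]
  field_simp
  ring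

lemma stepProb_succ_pos (i : ℤ) : 0 < stepProb V i (i + 1) := by
  rw [stepProb_succ]
  positivity

lemma stepProb_of_ne {i j : ℤ} (h₁ : j ≠ i + 1) (h₂ : j ≠ i - 1) : stepProb V i j = 0 := by
  rw [stepProb, if_neg h₁, if_neg h₂]

lemma stepProb_nonneg (i j : ℤ) : 0 ≤ stepProb V i j := by
  unfold stepProb
  split_ifs
  · positivity
  · rw [sub_nonneg, div_le_one (by positivity)]
    linarith [Real.exp_pos (V i - V (i - 1))]
  · rfl

lemma stepProb_succ_add_pred (i : ℤ) : stepProb V i (i + 1) + stepProb V i (i - 1) = 1 := by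
  rw [stepProb, stepProb, if_pos rfl, if_neg (by omega), if_pos rfl]
  ring

lemma stepProb_pred_eq_mul (i : ℤ) :
    stepProb V i (i - 1) = stepProb V i (i + 1) * Real.exp (V i - V (i - 1)) := by
  rw [stepProb_succ, stepProb_pred, show V (i - 1) - V i = -(V i - V (i - 1)) by ring,
    Real.exp_neg]
  field_simp
  ring

lemma stepProb_neg (hsym : ∀ z, V (-1 - z) = V z) (i j : ℤ) :
    stepProb V (-i) (-j) = stepProb V i j := by
  have hV₁ : V (-i) = V (i - 1) := by rw [← hsym]; ring_nf
  have hV₂ : V (-i - 1) = V i := by rw [← hsym]; ring_nf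
  by_cases h₁ : j = i + 1
  · rw [h₁, show -(i + 1) = -i - 1 by ring, stepProb_pred, stepProb_succ, hV₁, hV₂]
  by_cases h₂ : j = i - 1
  · rw [h₂, show -(i - 1) = -i + 1 by ring, stepProb_succ, stepProb_pred, hV₁, hV₂]
  rw [stepProb_of_ne V h₁ h₂, stepProb_of_ne V (by omega) (by omega)]

lemma tsum_ofReal_stepProb_mul (i : ℤ) (g : ℤ → ℝ≥0∞) :
    ∑' c, ENNReal.ofReal (stepProb V i c) * g c
      = ENNReal.ofReal (stepProb V i (i + 1)) * g (i + 1)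
        + ENNReal.ofReal (stepProb V i (i - 1)) * g (i - 1) := by
  rw [tsum_eq_sum (s := {i + 1, i - 1}), Finset.sum_pair (by omega)]
  intro c hc
  simp only [Finset.mem_insert, Finset.mem_singleton, not_or] at hc
  rw [stepProb_of_ne V hc.1 hc.2, ENNReal.ofReal_zero, zero_mul]

lemma ofReal_stepProb_succ_add_pred (i : ℤ) :
    ENNReal.ofReal (stepProb V i (i + 1)) + ENNReal.ofReal (stepProb V i (i - 1)) = 1 := by
  rw [← ENNReal.ofReal_add (stepProb_nonneg V _ _) (stepProb_nonneg V _ _),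
    stepProb_succ_add_pred, ENNReal.ofReal_one]

end StepProb

/-- A path is encoded by its starting site `a` and the list `l` of the sites visited afterwards. -/
noncomputable def pathWeight (V : ℤ → ℝ) : ℤ → List ℤ → ℝ≥0∞
  | _, [] => 1
  | a, b :: l => ENNReal.ofReal (stepProb V a b) * pathWeight V b l

/-- The default value `0` is only reached for `k > l.length`. -/
def pathAt (a : ℤ) (l : List ℤ) (k : ℕ) : ℤ := (a :: l).getD k 0

section Paths

@[simp] lemma pathAt_zero (a : ℤ) (l : List ℤ) : pathAt a l 0 = a := rfl

@[simp] lemma pathAt_cons_succ (a b : ℤ) (l : List ℤ) (k : ℕ) :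
    pathAt a (b :: l) (k + 1) = pathAt b l k := rfl

lemma pathAt_append_of_le (a : ℤ) (l s : List ℤ) {k : ℕ} (hk : k ≤ l.length) :
    pathAt a (l ++ s) k = pathAt a l k := by
  induction l generalizing a k with
  | nil =>
    obtain rfl : k = 0 := by simpa using hk
    rfl
  | cons b l ih =>
    cases k with
    | zero => rfl
    | succ k => exact ih b (by simpa using hk)

lemma pathAt_append_length_add (a : ℤ) (l s : List ℤ) (k : ℕ) :
    pathAt a (l ++ s) (l.length + k) = pathAt (pathAt a l l.length) s k := by
  induction l generalizing a with
  | nil => simp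
  | cons b l ih => simpa [Nat.add_right_comm] using ih b

lemma pathAt_take (a : ℤ) (l : List ℤ) {m k : ℕ} (hk : k ≤ m) :
    pathAt a (l.take m) k = pathAt a l k := by
  rcases le_total m l.length with hm | hm
  · conv_rhs => rw [← List.take_append_drop m l]
    rw [pathAt_append_of_le a _ _ (by simpa [List.length_take, hm] using hk)]
  · rw [List.take_of_length_le hm]

lemma pathAt_neg (a : ℤ) (l : List ℤ) (k : ℕ) :
    pathAt (-a) (l.map Neg.neg) k = -pathAt a l k := by
  induction l generalizing a k with
  | nil => cases k <;> simp [pathAt]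
  | cons b l ih => cases k <;> simp [ih]

variable (V : ℤ → ℝ)

lemma pathWeight_append (a : ℤ) (l s : List ℤ) :
    pathWeight V a (l ++ s) = pathWeight V a l * pathWeight V (pathAt a l l.length) s := by
  induction l generalizing a with
  | nil => simp [pathWeight]
  | cons b l ih => simp [pathWeight, ih, mul_assoc]

lemma pathWeight_eq_ofReal_prod (a : ℤ) (l : List ℤ) :
    pathWeight V a l
      = ENNReal.ofReal
          (∏ k ∈ Finset.range l.length, stepProb V (pathAt a l k) (pathAt a l (k + 1))) := by
  induction l generalizing a with
  | nil => simp [pathWeight]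
  | cons b l ih =>
    rw [pathWeight, ih, List.length_cons, Finset.prod_range_succ',
      ENNReal.ofReal_mul' (stepProb_nonneg V _ _), mul_comm]
    simp

lemma pathAt_succ_of_pathWeight_ne_zero {a : ℤ} {l : List ℤ} (hw : pathWeight V a l ≠ 0)
    {k : ℕ} (hk : k < l.length) :
    pathAt a l (k + 1) = pathAt a l k + 1 ∨ pathAt a l (k + 1) = pathAt a l k - 1 := by
  induction l generalizing a k with
  | nil => simp at hk
  | cons b l ih =>
    rw [pathWeight, mul_ne_zero_iff] at hw
    cases k with
    | zero =>
      by_contra h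
      simp only [zero_add, pathAt_cons_succ, pathAt_zero, not_or] at h
      exact hw.1 (by rw [stepProb_of_ne V h.1 h.2, ENNReal.ofReal_zero])
    | succ k => exact ih hw.2 (by simpa using hk)

lemma pathWeight_neg (hsym : ∀ z, V (-1 - z) = V z) (a : ℤ) (l : List ℤ) :
    pathWeight V (-a) (l.map Neg.neg) = pathWeight V a l := by
  induction l generalizing a with
  | nil => rfl
  | cons b l ih => simp [pathWeight, stepProb_neg V hsym, ih]

end Paths

def pathCylinder (a : ℤ) (l : List ℤ) : Set (ℕ → ℤ) :=
  {w | ∀ k ≤ l.length, w k = pathAt a l k}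

section Cylinder

lemma measurableSet_pathCylinder (a : ℤ) (l : List ℤ) : MeasurableSet (pathCylinder a l) := by
  have : pathCylinder a l = ⋂ k ∈ Set.Iic l.length, {w : ℕ → ℤ | w k = pathAt a l k} := by
    ext w
    simp [pathCylinder]
  rw [this]
  exact .biInter (Set.to_countable _) fun k _ =>
    measurableSet_eq_fun (measurable_pi_apply k) measurable_const

lemma prefix_of_pathAt_eq {a : ℤ} {l₁ l₂ : List ℤ} (hlen : l₁.length ≤ l₂.length)
    (h : ∀ k ≤ l₁.length, pathAt a l₁ k = pathAt a l₂ k) : l₁ <+: l₂ := by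
  induction l₁ generalizing a l₂ with
  | nil => exact List.nil_prefix
  | cons b l₁ ih =>
    obtain _ | ⟨b₂, l₂⟩ := l₂
    · simp at hlen
    obtain rfl : b = b₂ := by simpa using h 1 (by simp)
    exact List.cons_prefix_cons.mpr ⟨rfl, ih (by simpa using hlen)
      fun k hk => by simpa using h (k + 1) (by simpa using hk)⟩

lemma disjoint_pathCylinder {a : ℤ} {l₁ l₂ : List ℤ} (h₁₂ : ¬l₁ <+: l₂)
    (h₂₁ : ¬l₂ <+: l₁) : Disjoint (pathCylinder a l₁) (pathCylinder a l₂) := by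
  refine Set.disjoint_left.mpr fun w hw₁ hw₂ => ?_
  rcases le_total l₁.length l₂.length with hle | hle
  · exact h₁₂ <| prefix_of_pathAt_eq hle fun k hk => by
      rw [← hw₁ k hk, hw₂ k (hk.trans hle)]
  · exact h₂₁ <| prefix_of_pathAt_eq hle fun k hk => by
      rw [← hw₂ k hk, hw₁ k (hk.trans hle)]

variable {V : ℤ → ℝ} {P : ℤ → Measure (ℕ → ℤ)}

lemma IsRWInPotential.measure_pathCylinder (hP : IsRWInPotential V P) (a : ℤ) (l : List ℤ) :
    P a (pathCylinder a l) = pathWeight V a l := by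
  have := hP.1 a
  rw [pathWeight_eq_ofReal_prod, ← hP.2 a l.length (pathAt a l) rfl,
    ENNReal.ofReal_toReal (measure_ne_top _ _)]
  rfl

lemma IsRWInPotential.tsum_pathWeight_le_one (hP : IsRWInPotential V P) (a : ℤ)
    (S : Set (List ℤ)) (hS : ∀ l₁ ∈ S, ∀ l₂ ∈ S, l₁ <+: l₂ → l₁ = l₂) :
    ∑' l : S, pathWeight V a l ≤ 1 := by
  have := hP.1 a
  have hdisj : Pairwise (Function.onFun Disjoint fun l : S => pathCylinder a l) :=
    fun l₁ l₂ hne => disjoint_pathCylinder (fun h => hne (Subtype.ext (hS _ l₁.2 _ l₂.2 h)))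
      (fun h => hne (Subtype.ext (hS _ l₂.2 _ l₁.2 h).symm))
  calc ∑' l : S, pathWeight V a l = ∑' l : S, P a (pathCylinder a l) := by
        simp_rw [hP.measure_pathCylinder]
    _ = P a (⋃ l : S, pathCylinder a l) :=
        (measure_iUnion hdisj fun l => measurableSet_pathCylinder a l).symm
    _ ≤ 1 := prob_le_one

lemma IsRWInPotential.ae_eq_start (hP : IsRWInPotential V P) (a : ℤ) :
    ∀ᵐ w ∂P a, w 0 = a := by
  have := hP.1 a
  have h : pathCylinder a [] ∈ ae (P a) := (mem_ae_iff_prob_eq_one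
    (measurableSet_pathCylinder a [])).mpr (hP.measure_pathCylinder a [])
  filter_upwards [h] with w hw
  exact hw 0 le_rfl

lemma IsRWInPotential.measure_eval_eq (hP : IsRWInPotential V P) (a b : ℤ) (n : ℕ) :
    P a {w | w n = b}
      = ∑' l : {l : List ℤ // l.length = n ∧ pathAt a l n = b}, pathWeight V a l := by
  set S := {l : List ℤ // l.length = n ∧ pathAt a l n = b}
  have hdisj : Pairwise (Function.onFun Disjoint fun l : S => pathCylinder a l) := by
    intro l₁ l₂ hne
    have hne' : l₁.1 ≠ l₂.1 := fun h => hne (Subtype.ext h)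
    have hlen : l₁.1.length = l₂.1.length := l₁.2.1.trans l₂.2.1.symm
    exact disjoint_pathCylinder (fun h => hne' (h.eq_of_length hlen))
      (fun h => hne' (h.eq_of_length hlen.symm).symm)
  have hcover : {w : ℕ → ℤ | w n = b} =ᵐ[P a] ⋃ l : S, pathCylinder a l := by
    filter_upwards [hP.ae_eq_start a] with w hw
    have hpath : ∀ k ≤ n, pathAt a ((List.range n).map (fun k => w (k + 1))) k = w k := by
      rintro (_ | k) hk
      · exact hw.symm
      · simp [pathAt, List.getD_eq_getElem?_getD, List.getElem?_range (by omega : k < n)]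
    change (w n = b) = (w ∈ ⋃ l : S, pathCylinder a l)
    rw [eq_iff_iff, Set.mem_iUnion]
    constructor
    · intro hwn
      exact ⟨⟨_, by simp, by rw [hpath n le_rfl, hwn]⟩,
        fun k hk => (hpath k (by simpa using hk)).symm⟩
    · rintro ⟨⟨l, hlen, hend⟩, hl⟩
      rw [hl n hlen.ge, hend]
  rw [measure_congr hcover, measure_iUnion hdisj fun l => measurableSet_pathCylinder a l]
  exact tsum_congr fun l => hP.measure_pathCylinder a l

end Cylinder

def IsHitPath (E : Set ℤ) (i : ℤ) (l : List ℤ) : Prop :=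
  pathAt i l l.length = 0 ∧ ∀ k < l.length, pathAt i l k ∈ E

noncomputable def hitWeight (V : ℤ → ℝ) (E : Set ℤ) (i : ℤ) : ℝ≥0∞ :=
  ∑' l : {l // IsHitPath E i l}, pathWeight V i l

section HitWeight

variable {E : Set ℤ}

lemma isHitPath_nil {i : ℤ} : IsHitPath E i [] ↔ i = 0 := by
  simp [IsHitPath]

lemma isHitPath_cons {i c : ℤ} {l : List ℤ} :
    IsHitPath E i (c :: l) ↔ i ∈ E ∧ IsHitPath E c l := by
  simp only [IsHitPath, List.length_cons, Nat.forall_lt_succ_left, pathAt_zero,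
    pathAt_cons_succ]
  tauto

lemma IsHitPath.eq_of_prefix (h0 : 0 ∉ E) {i : ℤ} {l₁ l₂ : List ℤ}
    (h₁ : IsHitPath E i l₁) (h₂ : IsHitPath E i l₂) (h : l₁ <+: l₂) : l₁ = l₂ := by
  obtain ⟨_ | ⟨c, s⟩, rfl⟩ := h
  · simp
  · have := h₂.2 l₁.length (by simp)
    rw [pathAt_append_of_le i l₁ _ le_rfl, h₁.1] at this
    exact absurd this h0

def hitPathConsEquiv {i : ℤ} (hi : i ∈ E) (hi0 : i ≠ 0) :
    {l // IsHitPath E i l} ≃ Σ c : ℤ, {l // IsHitPath E c l} where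
  toFun
    | ⟨[], hl⟩ => absurd (isHitPath_nil.mp hl) hi0
    | ⟨c :: l, hl⟩ => ⟨c, l, (isHitPath_cons.mp hl).2⟩
  invFun x := ⟨x.1 :: x.2.1, isHitPath_cons.mpr ⟨hi, x.2.2⟩⟩
  left_inv := by
    rintro ⟨_ | ⟨c, l⟩, hl⟩
    · exact absurd (isHitPath_nil.mp hl) hi0
    · rfl
  right_inv _ := rfl

lemma IsRWInPotential.hitWeight_le_one {V : ℤ → ℝ} {P : ℤ → Measure (ℕ → ℤ)}
    (hP : IsRWInPotential V P) (h0 : 0 ∉ E) (i : ℤ) : hitWeight V E i ≤ 1 :=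
  hP.tsum_pathWeight_le_one i {l | IsHitPath E i l} fun _ h₁ _ h₂ =>
    IsHitPath.eq_of_prefix h0 h₁ h₂

variable (V : ℤ → ℝ)

lemma hitWeight_zero (h0 : 0 ∉ E) : hitWeight V E 0 = 1 := by
  rw [hitWeight, tsum_eq_single ⟨[], isHitPath_nil.mpr rfl⟩]
  · rfl
  · rintro ⟨_ | ⟨c, l⟩, hl⟩ hne
    · exact absurd rfl hne
    · exact absurd (isHitPath_cons.mp hl).1 h0

lemma hitWeight_of_notMem {i : ℤ} (hi : i ∉ E) (hi0 : i ≠ 0) : hitWeight V E i = 0 := by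
  have : IsEmpty {l // IsHitPath E i l} := by
    refine ⟨fun ⟨l, hl⟩ => ?_⟩
    cases l with
    | nil => exact hi0 (isHitPath_nil.mp hl)
    | cons c l => exact hi (isHitPath_cons.mp hl).1
  rw [hitWeight, tsum_empty]

lemma hitWeight_eq_tsum {i : ℤ} (hi : i ∈ E) (hi0 : i ≠ 0) :
    hitWeight V E i = ∑' c, ENNReal.ofReal (stepProb V i c) * hitWeight V E c := by
  rw [hitWeight, ← (hitPathConsEquiv hi hi0).symm.tsum_eq, ENNReal.tsum_sigma']
  simp_rw [hitWeight, ← ENNReal.tsum_mul_left]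
  rfl

lemma hitWeight_eq_add {i : ℤ} (hi : i ∈ E) (hi0 : i ≠ 0) :
    hitWeight V E i = ENNReal.ofReal (stepProb V i (i + 1)) * hitWeight V E (i + 1)
      + ENNReal.ofReal (stepProb V i (i - 1)) * hitWeight V E (i - 1) := by
  rw [hitWeight_eq_tsum V hi hi0, tsum_ofReal_stepProb_mul]

lemma hitWeight_mono {E' : Set ℤ} (h : E ⊆ E') (i : ℤ) :
    hitWeight V E i ≤ hitWeight V E' i :=
  Summable.tsum_le_tsum_of_inj (fun l => ⟨l.1, l.2.1, fun k hk => h (l.2.2 k hk)⟩)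
    (fun _ _ hl => Subtype.ext (by simpa using congrArg Subtype.val hl)) (fun _ _ => zero_le)
    (fun _ => le_rfl) ENNReal.summable ENNReal.summable

end HitWeight

section Ruin

variable (V : ℤ → ℝ)

lemma Wfun_natCast (n : ℕ) : Wfun V n = ∑ k ∈ Finset.range n, Real.exp (V k) := by
  simp [Wfun]

lemma Wfun_natCast_pos {n : ℕ} (hn : 0 < n) : 0 < Wfun V n := by
  rw [Wfun_natCast]
  exact Finset.sum_pos (fun k _ => Real.exp_pos _) (by simpa using hn.ne')

lemma sub_succ_eq_mul_exp_of_harmonic {y : ℤ → ℝ} {N : ℕ}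
    (hy : ∀ i : ℤ, 0 < i → i < N →
      y i = stepProb V i (i + 1) * y (i + 1) + stepProb V i (i - 1) * y (i - 1))
    {k : ℕ} (hk : k < N) : y k - y (k + 1) = (y 0 - y 1) * Real.exp (V k - V 0) := by
  induction k with
  | zero => simp
  | succ k ih =>
    have hrec := hy (k + 1) (by omega) (by omega)
    have hsum := stepProb_succ_add_pred V (k + 1)
    have hbal := stepProb_pred_eq_mul V (k + 1)
    rw [add_sub_cancel_right] at hrec hsum hbal
    have hD : y (k + 1) - y (k + 1 + 1) = (y k - y (k + 1)) * Real.exp (V (k + 1) - V k) := by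
      refine mul_left_cancel₀ (stepProb_succ_pos V (k + 1)).ne' ?_
      linear_combination y (k + 1) * hsum + hrec + (y k - y (k + 1)) * hbal
    push_cast
    rw [hD, ih (by omega), mul_assoc, ← Real.exp_add]
    ring_nf

lemma IsRWInPotential.hitWeight_Ioo {P : ℤ → Measure (ℕ → ℤ)} (hP : IsRWInPotential V P)
    {N : ℕ} (hN : 0 < N) {i : ℕ} (hi : i ≤ N) :
    hitWeight V (Set.Ioo 0 N) i = ENNReal.ofReal (1 - Wfun V i / Wfun V N) := by
  set E : Set ℤ := Set.Ioo 0 N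
  have h0 : (0 : ℤ) ∉ E := by simp [E]
  have hfin (z : ℤ) : hitWeight V E z ≠ ⊤ := ne_top_of_le_ne_top ENNReal.one_ne_top
    (hP.hitWeight_le_one h0 z)
  set y : ℤ → ℝ := fun z => (hitWeight V E z).toReal
  have hy0 : y 0 = 1 := by simp [y, hitWeight_zero V h0]
  have hyN : y N = 0 := by
    simp [y, hitWeight_of_notMem V (by simp [E] : (N : ℤ) ∉ E) (by omega)]
  have hharm (j : ℤ) (hj : 0 < j) (hjN : j < N) :
      y j = stepProb V j (j + 1) * y (j + 1) + stepProb V j (j - 1) * y (j - 1) := by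
    simp only [y, hitWeight_eq_add V (by simp [E, hj, hjN] : j ∈ E) hj.ne']
    rw [ENNReal.toReal_add (ENNReal.mul_ne_top ENNReal.ofReal_ne_top (hfin _))
      (ENNReal.mul_ne_top ENNReal.ofReal_ne_top (hfin _))]
    simp [ENNReal.toReal_ofReal (stepProb_nonneg V _ _)]
  have htel (m : ℕ) (hm : m ≤ N) :
      y 0 - y m = (y 0 - y 1) * Real.exp (-V 0) * Wfun V m := by
    rw [Wfun_natCast, Finset.mul_sum]
    refine (Finset.sum_range_sub' (fun k : ℕ => y k) m).symm.trans
      (Finset.sum_congr rfl fun k hk => ?_)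
    rw [Nat.cast_succ, sub_succ_eq_mul_exp_of_harmonic V hharm (by simp at hk; omega),
      Real.exp_sub, Real.exp_neg]
    ring
  have hWN := Wfun_natCast_pos V hN
  have hc : (y 0 - y 1) * Real.exp (-V 0) = 1 / Wfun V N := by
    rw [eq_div_iff hWN.ne']
    linarith [htel N le_rfl]
  have hyi : y i = 1 - Wfun V i / Wfun V N := by
    have := htel i hi
    rw [hc, one_div_mul_eq_div] at this
    linarith
  rw [← hyi, ENNReal.ofReal_toReal (hfin i)]

end Ruin

section Escape

variable (V : ℤ → ℝ)

lemma IsHitPath.isHitPath_Ioo {i : ℕ} {l : List ℤ} (h : IsHitPath {0}ᶜ i l)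
    (hw : pathWeight V i l ≠ 0) : IsHitPath (Set.Ioo 0 (i + l.length : ℕ)) i l := by
  have hbound (k : ℕ) (hk : k < l.length) : 0 < pathAt i l k ∧ pathAt i l k ≤ i + k := by
    have hne : pathAt i l k ≠ 0 := h.2 k hk
    induction k with
    | zero => simp only [pathAt_zero] at hne ⊢; omega
    | succ k ih =>
      have := pathAt_succ_of_pathWeight_ne_zero V hw (by omega : k < l.length)
      have := ih (by omega) (h.2 k (by omega))
      push_cast
      omega
  refine ⟨h.1, fun k hk => ?_⟩
  have := hbound k hk
  simp only [Set.mem_Ioo]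
  omega

lemma hitWeight_compl_zero_eq_iSup (i : ℕ) :
    hitWeight V {0}ᶜ i = ⨆ N : ℕ, hitWeight V (Set.Ioo 0 N) i := by
  have hsum (E : Set ℤ) :
      hitWeight V E i = ∑' l, {l | IsHitPath E i l}.indicator (pathWeight V i) l :=
    tsum_subtype {l | IsHitPath E i l} (pathWeight V i)
  have hmono (l : List ℤ) :
      Monotone fun N : ℕ => {l | IsHitPath (Set.Ioo 0 N) i l}.indicator (pathWeight V i) l := by
    refine fun N M hNM => Set.indicator_le_indicator_of_subset (fun l hl => ?_) (fun _ => zero_le) l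
    have hbox : Set.Ioo (0 : ℤ) N ⊆ Set.Ioo 0 M :=
      Set.Ioo_subset_Ioo_right (by exact_mod_cast hNM)
    exact (⟨hl.1, fun k hk => hbox (hl.2 k hk)⟩ : IsHitPath _ i l)
  refine le_antisymm ?_ (iSup_le fun N => hitWeight_mono V (fun x hx => hx.1.ne') i)
  rw [hsum, ← iSup_congr fun N => (hsum _).symm, ← ENNReal.tsum_iSup_of_monotone hmono]
  refine ENNReal.tsum_le_tsum fun l => ?_
  by_cases hl : IsHitPath {0}ᶜ i l ∧ pathWeight V i l ≠ 0
  · refine le_iSup_of_le (i + l.length) ?_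
    rw [Set.indicator_of_mem (show l ∈ {l | IsHitPath {0}ᶜ i l} from hl.1),
      Set.indicator_of_mem (show l ∈ {l | IsHitPath _ i l} from hl.1.isHitPath_Ioo V hl.2)]
  · rw [(Set.indicator_apply_eq_zero (s := {l | IsHitPath {0}ᶜ i l})).mpr
      fun h => not_not.mp fun hw => hl ⟨h, hw⟩]
    exact zero_le

lemma IsRWInPotential.hitWeight_compl_zero {P : ℤ → Measure (ℕ → ℤ)}
    (hP : IsRWInPotential V P) (hV0 : V 0 = 0) :
    hitWeight V {0}ᶜ 1 = 1 - (∑' n : ℕ, ENNReal.ofReal (Real.exp (V n)))⁻¹ := by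
  have hbox (N : ℕ) : hitWeight V (Set.Ioo 0 N) 1 = 1 - (ENNReal.ofReal (Wfun V N))⁻¹ := by
    rcases Nat.eq_zero_or_pos N with rfl | hN
    · rw [hitWeight_of_notMem V (by simp) one_ne_zero]
      simp [Wfun]
    · have hWN := Wfun_natCast_pos V hN
      have := hP.hitWeight_Ioo V hN (i := 1) (by omega)
      rw [Wfun_natCast V 1] at this
      simp only [Nat.cast_one, Finset.range_one, Finset.sum_singleton, CharP.cast_eq_zero, hV0,
        Real.exp_zero] at this
      rw [this, ENNReal.ofReal_sub _ (by positivity), ENNReal.ofReal_one, one_div,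
        ENNReal.ofReal_inv_of_pos hWN]
  rw [← Nat.cast_one, hitWeight_compl_zero_eq_iSup, Nat.cast_one, iSup_congr hbox,
    ← ENNReal.sub_iInf, ← ENNReal.inv_iSup,
    ENNReal.tsum_eq_iSup_nat]
  congr 3 with N
  rw [Wfun_natCast, ENNReal.ofReal_sum_of_nonneg fun k _ => (Real.exp_pos _).le]

end Escape

section Symmetry

variable (V : ℤ → ℝ)

lemma isHitPath_compl_zero_neg {i : ℤ} {l : List ℤ} :
    IsHitPath {0}ᶜ (-i) (l.map Neg.neg) ↔ IsHitPath {0}ᶜ i l := by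
  simp [IsHitPath, pathAt_neg]

lemma hitWeight_compl_zero_neg (hsym : ∀ z, V (-1 - z) = V z) (i : ℤ) :
    hitWeight V {0}ᶜ (-i) = hitWeight V {0}ᶜ i := by
  rw [hitWeight, hitWeight, ← ((Equiv.listEquivOfEquiv (Equiv.neg ℤ)).subtypeEquiv
    fun l => isHitPath_compl_zero_neg.symm).tsum_eq]
  exact tsum_congr fun l => pathWeight_neg V hsym i l

noncomputable def returnWeight : ℝ≥0∞ :=
  ∑' c, ENNReal.ofReal (stepProb V 0 c) * hitWeight V {0}ᶜ c

lemma returnWeight_eq_hitWeight (hsym : ∀ z, V (-1 - z) = V z) :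
    returnWeight V = hitWeight V {0}ᶜ 1 := by
  have hneg : hitWeight V {0}ᶜ (0 - 1) = hitWeight V {0}ᶜ (0 + 1) := by
    simpa using hitWeight_compl_zero_neg V hsym 1
  rw [returnWeight, tsum_ofReal_stepProb_mul, hneg, ← add_mul, ofReal_stepProb_succ_add_pred,
    one_mul, zero_add]

end Symmetry

def IsLoop (l : List ℤ) : Prop := pathAt 0 l l.length = 0

/-- An excursion from `0`, whose starting point `0` is left implicit. -/
abbrev Excursion : Type := Σ c : ℤ, {l // IsHitPath {0}ᶜ c l}

def Excursion.append (e : Excursion) (l : List ℤ) : List ℤ := e.1 :: (e.2.1 ++ l)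

section Loops

lemma Excursion.isLoop_append (e : Excursion) {l : List ℤ} (hl : IsLoop l) :
    IsLoop (e.append l) := by
  have := pathAt_append_length_add e.1 e.2.1 l l.length
  rw [e.2.2.1] at this
  simpa [IsLoop, Excursion.append, Nat.add_comm] using this.trans hl

lemma Excursion.append_injective :
    Function.Injective fun x : Excursion × {l // IsLoop l} => x.1.append x.2.1 := by
  rintro ⟨⟨c, e, he⟩, l, hl⟩ ⟨⟨c', e', he'⟩, l', hl'⟩ h
  simp only [Excursion.append, List.cons.injEq] at h
  obtain ⟨rfl, h⟩ := h
  have hpre : e <+: e' ∨ e' <+: e :=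
    List.prefix_or_prefix_of_prefix (List.prefix_append e l) (h ▸ List.prefix_append e' l')
  obtain rfl : e = e' := hpre.elim (he.eq_of_prefix (by simp) he')
    fun h => (he'.eq_of_prefix (by simp) he h).symm
  obtain rfl := List.append_cancel_left h
  rfl

lemma Excursion.exists_append {c : ℤ} {t : List ℤ} (h : IsLoop (c :: t)) :
    ∃ (e : Excursion) (l : {l // IsLoop l}), e.append l = c :: t := by
  have hend : pathAt c t t.length = 0 := h
  have hex : ∃ k, pathAt c t k = 0 := ⟨_, hend⟩
  set m := Nat.find hex
  have hm : m ≤ t.length := Nat.find_min' hex hend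
  have hlen : (t.take m).length = m := by simp [hm]
  have hhit : IsHitPath {0}ᶜ c (t.take m) := by
    refine ⟨?_, fun k hk => ?_⟩
    · rw [hlen, pathAt_take c t le_rfl]
      exact Nat.find_spec hex
    · rw [hlen] at hk
      rw [pathAt_take c t hk.le]
      exact Nat.find_min hex hk
  have hloop : IsLoop (t.drop m) := by
    have := pathAt_append_length_add c (t.take m) (t.drop m) (t.drop m).length
    rw [List.take_append_drop, hhit.1, hlen, show m + (t.drop m).length = t.length by simp; omega,
      hend] at this
    exact this.symm
  exact ⟨⟨c, _, hhit⟩, ⟨_, hloop⟩, by simp [Excursion.append]⟩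

/-- Cutting a nonempty loop at its first return to `0`. -/
noncomputable def loopEquiv : Option (Excursion × {l // IsLoop l}) ≃ {l // IsLoop l} :=
  Equiv.ofBijective
    (fun o => o.elim ⟨[], rfl⟩ fun x => ⟨x.1.append x.2.1, x.1.isLoop_append x.2.2⟩) <| by
    refine ⟨?_, ?_⟩
    · rintro (_ | x) (_ | y) h
      · rfl
      · exact absurd (congrArg Subtype.val h) (List.cons_ne_nil _ _).symm
      · exact absurd (congrArg Subtype.val h) (List.cons_ne_nil _ _)
      · exact congrArg some (Excursion.append_injective (congrArg Subtype.val h))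
    · rintro ⟨_ | ⟨c, t⟩, hl⟩
      · exact ⟨none, rfl⟩
      · obtain ⟨e, l, h⟩ := Excursion.exists_append hl
        exact ⟨some (e, l), Subtype.ext h⟩

lemma tsum_loop_eq_nil_add (g : List ℤ → ℝ≥0∞) :
    ∑' l : {l // IsLoop l}, g l
      = g [] + ∑' x : Excursion × {l // IsLoop l}, g (x.1.append x.2) := by
  rw [← loopEquiv.tsum_eq, ENNReal.tsum_option]
  rfl

variable (V : ℤ → ℝ)

lemma pathWeight_excursion_append (e : Excursion) (l : List ℤ) :
    pathWeight V 0 (e.append l)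
      = ENNReal.ofReal (stepProb V 0 e.1) * pathWeight V e.1 e.2 * pathWeight V 0 l := by
  rw [Excursion.append, pathWeight, pathWeight_append, e.2.2.1, mul_assoc]

lemma tsum_excursion_mul (g : {l // IsLoop l} → ℝ≥0∞) :
    ∑' x : Excursion × {l // IsLoop l},
        ENNReal.ofReal (stepProb V 0 x.1.1) * pathWeight V x.1.1 x.1.2 * g x.2
      = returnWeight V * ∑' l, g l := by
  rw [ENNReal.tsum_prod', ENNReal.tsum_sigma', returnWeight]
  simp_rw [ENNReal.tsum_mul_left, ENNReal.tsum_mul_right, hitWeight, ENNReal.tsum_mul_left]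

noncomputable def loopWeight : ℝ≥0∞ := ∑' l : {l // IsLoop l}, pathWeight V 0 l

noncomputable def loopWeightLE (M : ℕ) : ℝ≥0∞ :=
  ∑' l : {l // IsLoop l}, if l.1.length ≤ M then pathWeight V 0 l else 0

lemma loopWeight_eq_one_add : loopWeight V = 1 + returnWeight V * loopWeight V := by
  conv_lhs => rw [loopWeight, tsum_loop_eq_nil_add]
  simp_rw [pathWeight_excursion_append]
  rw [tsum_excursion_mul V fun l => pathWeight V 0 l]
  rfl

lemma loopWeightLE_zero_le : loopWeightLE V 0 ≤ 1 := by
  rw [loopWeightLE, tsum_loop_eq_nil_add fun l => if l.length ≤ 0 then pathWeight V 0 l else 0]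
  simp [Excursion.append, pathWeight]

lemma loopWeightLE_succ_le (M : ℕ) :
    loopWeightLE V (M + 1) ≤ 1 + returnWeight V * loopWeightLE V M := by
  rw [loopWeightLE, loopWeightLE,
    tsum_loop_eq_nil_add fun l => if l.length ≤ M + 1 then pathWeight V 0 l else 0,
    ← tsum_excursion_mul]
  gcongr with x
  · simp [pathWeight]
  · simp only [Excursion.append, List.length_cons, List.length_append, add_le_add_iff_right]
    split_ifs
    · rw [← Excursion.append, pathWeight_excursion_append]
    · omega
    · exact zero_le
    · exact zero_le

lemma loopWeight_eq_iSup : loopWeight V = ⨆ M, loopWeightLE V M := by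
  unfold loopWeight loopWeightLE
  rw [← ENNReal.tsum_iSup_of_monotone]
  · refine tsum_congr fun l =>
      le_antisymm (le_iSup_of_le l.1.length (by simp)) (iSup_le fun M => ?_)
    split_ifs <;> simp
  · intro l M M' h
    dsimp only
    split_ifs <;> first | omega | simp

lemma loopWeight_eq_inv : loopWeight V = (1 - returnWeight V)⁻¹ :=
  ENNReal.eq_inv_one_sub_of_eq_one_add_mul (loopWeight_eq_one_add V) (loopWeight_eq_iSup V).le
    (loopWeightLE_zero_le V) (loopWeightLE_succ_le V)

end Loops

lemma lintegral_numVisits (μ : Measure (ℕ → ℤ)) (a : ℤ) :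
    ∫⁻ w, numVisits a w ∂μ = ∑' n, μ {w | w n = a} := by
  have hset (n : ℕ) : MeasurableSet {w : ℕ → ℤ | w n = a} :=
    measurableSet_eq_fun (measurable_pi_apply n) measurable_const
  have hind (n : ℕ) (w : ℕ → ℤ) :
      (if w n = a then (1 : ℝ≥0∞) else 0) = {w | w n = a}.indicator 1 w := by
    by_cases hw : w n = a <;> simp [hw]
  simp_rw [numVisits, hind]
  rw [lintegral_tsum fun n => (measurable_one.indicator (hset n)).aemeasurable]
  simp_rw [lintegral_indicator_one (hset _)]

def loopLengthEquiv :
    {l // IsLoop l} ≃ Σ n : ℕ, {l : List ℤ // l.length = n ∧ pathAt 0 l n = 0} where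
  toFun l := ⟨l.1.length, l.1, rfl, l.2⟩
  invFun x := ⟨x.2.1, by rw [IsLoop, x.2.2.1]; exact x.2.2.2⟩
  left_inv _ := rfl
  right_inv := by
    rintro ⟨_, l, rfl, _⟩
    rfl

section Green

variable {V : ℤ → ℝ} {P : ℤ → Measure (ℕ → ℤ)}

lemma IsRWInPotential.tsum_measure_eval_zero (hP : IsRWInPotential V P) :
    ∑' n, P 0 {w | w n = 0} = loopWeight V := by
  simp_rw [hP.measure_eval_eq]
  rw [← ENNReal.tsum_sigma'
      fun x : Σ n : ℕ, {l : List ℤ // l.length = n ∧ pathAt 0 l n = 0} => pathWeight V 0 x.2,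
    loopWeight, ← loopLengthEquiv.symm.tsum_eq]
  rfl

theorem IsRWInPotential.lintegral_numVisits_zero (hP : IsRWInPotential V P) (hV0 : V 0 = 0)
    (hsym : ∀ z, V (-1 - z) = V z) :
    ∫⁻ w, numVisits 0 w ∂P 0 = ∑' n : ℕ, ENNReal.ofReal (Real.exp (V n)) := by
  have hone : 1 ≤ ∑' n : ℕ, ENNReal.ofReal (Real.exp (V n)) := by
    simpa [hV0] using ENNReal.le_tsum (f := fun n : ℕ => ENNReal.ofReal (Real.exp (V n))) 0
  rw [lintegral_numVisits, hP.tsum_measure_eval_zero, loopWeight_eq_inv,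
    returnWeight_eq_hitWeight V hsym, hP.hitWeight_compl_zero V hV0,
    ENNReal.sub_sub_cancel ENNReal.one_ne_top (ENNReal.inv_le_one.mpr hone), inv_inv]

end Green

section SparsePotential

variable (β h f : ℝ) (ω : ℕ → ℝ) (t : ℕ → ℕ)

lemma sparsePot_zero : sparsePot β h f ω t 0 = 0 := by
  simp [sparsePot, sparsePotNat]

lemma sparsePot_neg_one_sub (z : ℤ) :
    sparsePot β h f ω t (-1 - z) = sparsePot β h f ω t z := by
  unfold sparsePot
  split_ifs <;> first | omega | congr 2; omega

lemma ofReal_exp_sparsePot_natCast (n : ℕ) :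
    ENNReal.ofReal (Real.exp (sparsePot β h f ω t n))
      = ENNReal.ofReal (Real.exp (∑ i ∈ Finset.Icc 1 n,
          (β * ω i + h) * Set.indicator (Set.range t) (fun _ => (1 : ℝ)) i))
        * ENNReal.ofReal (Real.exp (-f * n)) := by
  rw [← ENNReal.ofReal_mul (Real.exp_pos _).le, ← Real.exp_add]
  congr 2
  simp only [sparsePot, Nat.cast_nonneg, if_true, Int.toNat_natCast, sparsePotNat,
    Finset.sum_sub_distrib, Finset.sum_const, Nat.card_Icc, add_tsub_cancel_right, nsmul_eq_mul]
  ring_nf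

end SparsePotential

lemma measurable_indicator_range_apply (i : ℕ) :
    Measurable fun t : ℕ → ℕ => Set.indicator (Set.range t) (fun _ => (1 : ℝ)) i := by
  have hset : MeasurableSet {t : ℕ → ℕ | i ∈ Set.range t} := by
    have : {t : ℕ → ℕ | i ∈ Set.range t} = ⋃ m, {t | t m = i} := by
      ext t
      simp
    rw [this]
    exact .iUnion fun m => measurableSet_eq_fun (measurable_pi_apply m) measurable_const
  exact (measurable_one.indicator hset :
    Measurable ({t : ℕ → ℕ | i ∈ Set.range t}.indicator (1 : (ℕ → ℕ) → ℝ)))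

theorem rwsre_pinning_key_relation_general (β h f : ℝ) (ω : ℕ → ℝ)
    (Pτ : Measure (ℕ → ℕ))
    (PW : (ℕ → ℕ) → ℤ → Measure (ℕ → ℤ))
    (hPW : ∀ t, IsRWInPotential (sparsePot β h f ω t) (PW t)) :
    (∫⁻ t, (∫⁻ x, numVisits 0 x ∂(PW t 0)) ∂Pτ)
      = ∑' n : ℕ,
          (∫⁻ t, ENNReal.ofReal (Real.exp (∑ i ∈ Finset.Icc 1 n,
            (β * ω i + h) * Set.indicator (Set.range t) (fun _ => (1 : ℝ)) i)) ∂Pτ)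
          * ENNReal.ofReal (Real.exp (-f * n)) := by
  have hZ (n : ℕ) : Measurable fun t : ℕ → ℕ =>
      ENNReal.ofReal (Real.exp (∑ i ∈ Finset.Icc 1 n,
        (β * ω i + h) * Set.indicator (Set.range t) (fun _ => (1 : ℝ)) i)) :=
    (Finset.measurable_sum _ fun i _ =>
      (measurable_indicator_range_apply i).const_mul _).exp.ennreal_ofReal
  simp_rw [(hPW _).lintegral_numVisits_zero (sparsePot_zero β h f ω _)
    (sparsePot_neg_one_sub β h f ω _), ofReal_exp_sparsePot_natCast]
  rw [lintegral_tsum fun n => ((hZ n).mul_const _).aemeasurable]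
  simp_rw [lintegral_mul_const _ (hZ _)]

/-- the partially annealed mean number of returns to the origin of the
random walk in sparse random environment with drift `f` equals the grand canonical
partition function of the pinning model:
`E_τ[E_V^{ω,τ}(card{n ≥ 0 : X_n = 0})] = ∑_{n ≥ 0} Z_{n,ω}^{β,h} e^{-f n}`. -/
theorem rwsre_pinning_key_relation (β h f : ℝ) (hβ : 0 ≤ β) (ω : ℕ → ℝ)
    (Pτ : Measure (ℕ → ℕ)) [IsProbabilityMeasure Pτ]
    (hren : ∀ᵐ t ∂Pτ, t 0 = 0 ∧ StrictMono t)
    (PW : (ℕ → ℕ) → ℤ → Measure (ℕ → ℤ))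
    (hPW : ∀ t, IsRWInPotential (sparsePot β h f ω t) (PW t)) :
    (∫⁻ t, (∫⁻ x, numVisits 0 x ∂(PW t 0)) ∂Pτ)
      = ∑' n : ℕ,
          (∫⁻ t, ENNReal.ofReal (Real.exp (∑ i ∈ Finset.Icc 1 n,
            (β * ω i + h) * Set.indicator (Set.range t) (fun _ => (1 : ℝ)) i)) ∂Pτ)
          * ENNReal.ofReal (Real.exp (-f * n)) :=
  rwsre_pinning_key_relation_general β h f ω Pτ PW hPW
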